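/- Let N be a positive integer and μ ∈ ℝ^N with 0 ≤ μ[n] ≤ 1 for all n. Suppose t := Σ_{n=1}^{N} μ[n] satisfies t ≥ 1 and t is not an integer. Define m₁[n] = max(μ[n] − (t − ⌊t⌋), 0), m₂[n] = max(μ[n] − (⌈t⌉ − t), 0), r = (⌊t⌋(⌈t⌉ − t) − Σ_n m₁[n]) / (t − Σ_n m₁[n] − Σ_n m₂[n]), and the vectors μ^(⌊t⌋) = m₁ + r·(μ − m₁ − m₂) and μ^(⌈t⌉) = m₂ + (1−r)·(μ − m₁ − m₂). Then: (i) μ^(⌊t⌋) + μ^(⌈t⌉) = μ; (ii) all entries of μ^(⌊t⌋) and μ^(⌈t⌉) are nonnegative; (iii) Σ_{n=1}^{N} μ^(⌊t⌋)[n] = ⌊t⌋(⌈t⌉ − t) and Σ_{n=1}^{N} μ^(⌈t⌉)[n] = ⌈t⌉(t − ⌊t⌋); and (iv) for every n, μ^(⌊t⌋)[n] ≤ ⌈t⌉ − t and μ^(⌈t⌉)[n] ≤ t − ⌊t⌋. Consequently a (μ^(⌊t⌋), ⌊t⌋)-filling-problem solution and a (μ^(⌈t⌉), ⌈t⌉)-filling-problem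 solution both exist. -/

import Mathlib

/-!
Write `f = t - ⌊t⌋`; as `t ∉ ℤ`, `⌈t⌉ = ⌊t⌋ + 1`. Counting how many entries of `μ` exceed a
threshold shows `∑ m₁ ≤ ⌊t⌋ (1 - f)` and `∑ m₂ ≤ ⌈t⌉ f`, while `μ - m₁ - m₂ ≥ 0` pointwise; hence
`r ∈ [0, 1]` and the four properties of the split are linear bookkeeping.

A filling problem with entries in `[0, c]` summing to `τ c` is solved by peeling off layers: give
weight `ε` to a `τ`-set containing every entry equal to `c` and no zero entry, lower those entries
and the cap by `ε`, and take `ε` maximal so that the rest stays feasible. Then some entry strictly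
between `0` and the cap reaches `0` or the new cap, so the number of such entries drops.
-/

open Finset

section Filling

variable {ι : Type*} [Fintype ι] {τ : ℕ} {m : ι → ℝ} {c : ℝ}

noncomputable def fracSupport (m : ι → ℝ) (c : ℝ) : Finset ι :=
  univ.filter fun n => 0 < m n ∧ m n < c

theorem exists_capped_subset_card_eq_subset_support (hc0 : 0 < c) (h0 : ∀ n, 0 ≤ m n)
    (hc : ∀ n, m n ≤ c) (hsum : ∑ n, m n = τ * c) :
    ∃ S₀, univ.filter (fun n => m n = c) ⊆ S₀ ∧ S₀ ⊆ univ.filter (fun n => 0 < m n) ∧ #S₀ = τ := by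
  refine exists_subsuperset_card_eq (fun n hn => ?_) ?_ ?_
  · simp only [mem_filter, mem_univ, true_and] at hn ⊢; exact hn ▸ hc0
  · suffices (#(univ.filter fun n => m n = c) : ℝ) * c ≤ τ * c by
      exact_mod_cast le_of_mul_le_mul_right this hc0
    calc _ = ∑ n ∈ univ.filter (fun n => m n = c), m n := by
          rw [sum_congr rfl fun n hn => (mem_filter.mp hn).2, sum_const, nsmul_eq_mul]
      _ ≤ ∑ n, m n := sum_le_sum_of_subset_of_nonneg (subset_univ _) fun n _ _ => h0 n
      _ = τ * c := hsum
  · suffices (τ : ℝ) * c ≤ #(univ.filter fun n => 0 < m n) * c by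
      exact_mod_cast le_of_mul_le_mul_right this hc0
    calc (τ : ℝ) * c = ∑ n ∈ univ.filter (fun n => 0 < m n), m n := by
          rw [← hsum, sum_filter_of_ne fun n _ h => (h0 n).lt_of_ne' h]
      _ ≤ _ := by rw [← nsmul_eq_mul, ← sum_const]; exact sum_le_sum fun n _ => hc n

variable [DecidableEq ι]

def IsFilling (τ : ℕ) (m : ι → ℝ) (α : Finset ι → ℝ) : Prop :=
  (∀ S, 0 ≤ α S) ∧ ∀ n, ∑ S ∈ (univ.powersetCard τ).filter (fun S => n ∈ S), α S = m n

theorem isFilling_zero (τ : ℕ) : IsFilling (ι := ι) τ 0 0 :=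
  ⟨fun _ => le_rfl, fun _ => sum_const_zero⟩

theorem IsFilling.add_indicator {α : Finset ι → ℝ} (hα : IsFilling τ m α)
    {S₀ : Finset ι} (hS₀ : #S₀ = τ) {ε : ℝ} (hε : 0 ≤ ε) :
    IsFilling τ (fun n => m n + if n ∈ S₀ then ε else 0)
      (fun S => α S + if S = S₀ then ε else 0) := by
  refine ⟨fun S => add_nonneg (hα.1 S) (by split_ifs <;> simp [hε]), fun n => ?_⟩
  rw [sum_add_distrib, hα.2 n, sum_ite_eq']
  simp [hS₀]

theorem exists_isFilling_of_fracSupport_eq_empty (hc0 : 0 ≤ c)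
    (h0 : ∀ n, 0 ≤ m n) (hc : ∀ n, m n ≤ c) (hsum : ∑ n, m n = τ * c)
    (hfrac : fracSupport m c = ∅) : ∃ α, IsFilling τ m α := by
  rcases hc0.eq_or_lt with rfl | hc0
  · have hm : m = 0 := funext fun n => le_antisymm (hc n) (h0 n)
    exact ⟨0, hm ▸ isFilling_zero τ⟩
  set K := univ.filter fun n => m n = c
  have hm : m = fun n => 0 + if n ∈ K then c else 0 := by
    funext n
    have : ¬ (0 < m n ∧ m n < c) := by
      simpa [fracSupport] using eq_empty_iff_forall_notMem.mp hfrac n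
    by_cases h : m n = c
    · simp [K, h]
    · have := (h0 n).eq_or_lt.resolve_right fun h' => this ⟨h', (hc n).lt_of_ne h⟩
      simp [K, h, this]
  have hK : #K = τ := by
    have : ∑ n, m n = #K * c := by
      rw [hm]; simp only [zero_add, sum_ite_mem, univ_inter, sum_const, nsmul_eq_mul]
    exact_mod_cast mul_right_cancel₀ hc0.ne' (this.symm.trans hsum)
  exact ⟨_, hm ▸ (isFilling_zero τ).add_indicator hK hc0.le⟩

theorem fracSupport_sub_indicator_subset_erase {S₀ : Finset ι} {n₀ : ι} {ε : ℝ} (hε0 : 0 ≤ ε)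
    (hε : ε = if n₀ ∈ S₀ then m n₀ else c - m n₀) :
    fracSupport (fun n => m n - if n ∈ S₀ then ε else 0) (c - ε) ⊆
      (fracSupport m c).erase n₀ := by
  intro n hn
  simp only [fracSupport, mem_erase, mem_filter, mem_univ, true_and] at hn ⊢
  by_cases h : n ∈ S₀
  · simp only [h, if_true] at hn
    refine ⟨fun e => ?_, by linarith, by linarith⟩
    subst e; simp only [h, if_true] at hε; linarith
  · simp only [h, if_false, sub_zero] at hn
    refine ⟨fun e => ?_, hn.1, by linarith⟩
    subst e; simp only [h, if_false] at hε; linarith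

theorem exists_lowering_fracSupport_ssubset (hne : (fracSupport m c).Nonempty)
    (h0 : ∀ n, 0 ≤ m n) (hc : ∀ n, m n ≤ c) (hsum : ∑ n, m n = τ * c) :
    ∃ (S₀ : Finset ι) (ε : ℝ), #S₀ = τ ∧ 0 ≤ ε ∧ ε ≤ c ∧
      (∀ n, 0 ≤ m n - if n ∈ S₀ then ε else 0) ∧
      (∀ n, m n - (if n ∈ S₀ then ε else 0) ≤ c - ε) ∧
      fracSupport (fun n => m n - if n ∈ S₀ then ε else 0) (c - ε) ⊂ fracSupport m c := by
  have mem_frac {n} : n ∈ fracSupport m c ↔ 0 < m n ∧ m n < c := by simp [fracSupport]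
  obtain ⟨n₁, hn₁⟩ := hne
  have hc0 : 0 < c := (mem_frac.mp hn₁).1.trans (mem_frac.mp hn₁).2
  obtain ⟨S₀, hcap, hpos, hS₀⟩ := exists_capped_subset_card_eq_subset_support hc0 h0 hc hsum
  have hcap' : ∀ n ∉ S₀, m n < c := fun n hn =>
    (hc n).lt_of_ne fun h => hn (hcap (by simp [h]))
  have hpos' : ∀ n ∈ S₀, 0 < m n := fun n hn => by simpa using hpos hn
  -- Lowering by `g n` brings `m n` to `0` (on `S₀`) or to the lowered cap (off `S₀`).
  let g n := if n ∈ S₀ then m n else c - m n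
  obtain ⟨n₀, hn₀, hmin⟩ := (fracSupport m c).exists_min_image g ⟨n₁, hn₁⟩
  obtain ⟨hn₀0, hn₀c⟩ := mem_frac.mp hn₀
  have hε0 : 0 ≤ g n₀ := by
    by_cases h : n₀ ∈ S₀ <;> simp only [g, h, if_true, if_false] <;> linarith
  have hεc : g n₀ ≤ c := by
    by_cases h : n₀ ∈ S₀ <;> simp only [g, h, if_true, if_false] <;> linarith
  refine ⟨S₀, g n₀, hS₀, hε0, hεc, fun n => ?_, fun n => ?_,
    (fracSupport_sub_indicator_subset_erase hε0 rfl).trans_ssubset (erase_ssubset hn₀)⟩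
  · split_ifs with h
    · by_cases hf : n ∈ fracSupport m c
      · simpa [g, h] using hmin n hf
      · have : c ≤ m n := by
          by_contra hlt; exact hf (mem_frac.mpr ⟨hpos' n h, lt_of_not_ge hlt⟩)
        linarith
    · simpa using h0 n
  · split_ifs with h
    · linarith [hc n]
    · by_cases hf : n ∈ fracSupport m c
      · have := hmin n hf; simp only [g, h, if_false] at this; linarith
      · have : m n ≤ 0 := by
          by_contra hlt; exact hf (mem_frac.mpr ⟨lt_of_not_ge hlt, hcap' n h⟩)
        linarith

theorem exists_isFilling (hc0 : 0 ≤ c) (h0 : ∀ n, 0 ≤ m n) (hc : ∀ n, m n ≤ c)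
    (hsum : ∑ n, m n = τ * c) : ∃ α, IsFilling τ m α := by
  induction hk : #(fracSupport m c) using Nat.strong_induction_on generalizing m c with
  | _ k ih =>
  rcases (fracSupport m c).eq_empty_or_nonempty with hfrac | hfrac
  · exact exists_isFilling_of_fracSupport_eq_empty hc0 h0 hc hsum hfrac
  obtain ⟨S₀, ε, hS₀, hε0, hεc, h0', hc', hssub⟩ :=
    exists_lowering_fracSupport_ssubset hfrac h0 hc hsum
  have hsum' : ∑ n, (m n - if n ∈ S₀ then ε else 0) = τ * (c - ε) := by
    rw [sum_sub_distrib, hsum, sum_ite_mem, univ_inter, sum_const, hS₀, nsmul_eq_mul]; ring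
  obtain ⟨α, hα⟩ := ih _ (hk ▸ card_lt_card hssub) (sub_nonneg.mpr hεc) h0' hc' hsum' rfl
  exact ⟨_, by simpa using hα.add_indicator hS₀ hε0⟩

end Filling

section Split

variable {ι : Type*} [Fintype ι] {x : ι → ℝ}

theorem sum_max_sub_le (h0 : ∀ n, 0 ≤ x n) (h1 : ∀ n, x n ≤ 1) {a : ℝ} (ha0 : 0 ≤ a)
    (ha1 : a ≤ 1) (k : ℤ) :
    ∑ n, max (x n - a) 0 ≤ max (k * (1 - a)) (∑ n, x n - (k + 1) * a) := by
  classical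
  set K := univ.filter fun n => a < x n
  have hK : ∑ n, max (x n - a) 0 = ∑ n ∈ K, (x n - a) := by
    rw [sum_filter]
    refine sum_congr rfl fun n _ => ?_
    split_ifs with h
    · exact max_eq_left (by linarith)
    · exact max_eq_right (by linarith)
  rw [hK]
  rcases le_or_gt (#K : ℤ) k with hk | hk
  · refine le_max_of_le_left ?_
    calc ∑ n ∈ K, (x n - a) ≤ ∑ _n ∈ K, (1 - a) := sum_le_sum fun n _ => by linarith [h1 n]
      _ = #K * (1 - a) := by rw [sum_const, nsmul_eq_mul]
      _ ≤ k * (1 - a) := mul_le_mul_of_nonneg_right (by exact_mod_cast hk) (by linarith)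
  · refine le_max_of_le_right ?_
    have hk : (k : ℝ) + 1 ≤ #K := by exact_mod_cast hk
    calc ∑ n ∈ K, (x n - a) = ∑ n ∈ K, x n - #K * a := by
          rw [sum_sub_distrib, sum_const, nsmul_eq_mul]
      _ ≤ ∑ n, x n - (k + 1) * a := by
          have := sum_le_sum_of_subset_of_nonneg (subset_univ K) fun n _ _ => h0 n
          nlinarith

theorem sub_max_sub_sub_max_sub_nonneg {x a b : ℝ} (hx0 : 0 ≤ x) (hx1 : x ≤ 1) (ha : 0 ≤ a)
    (hb : 0 ≤ b) (hab : a + b = 1) : 0 ≤ x - max (x - a) 0 - max (x - b) 0 := by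
  rcases max_cases (x - a) 0 with ⟨e₁, _⟩ | ⟨e₁, _⟩ <;>
    rcases max_cases (x - b) 0 with ⟨e₂, _⟩ | ⟨e₂, _⟩ <;>
    rw [e₁, e₂] <;> linarith

theorem floor_ceil_split_spec {μ m₁ m₂ lo hi : ι → ℝ} {t r : ℝ} {k : ℤ}
    (hμ0 : ∀ n, 0 ≤ μ n) (hμ1 : ∀ n, μ n ≤ 1) (ht : t = ∑ n, μ n)
    (hkt : k ≤ t) (htk : t ≤ k + 1)
    (hm₁ : ∀ n, m₁ n = max (μ n - (t - k)) 0)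
    (hm₂ : ∀ n, m₂ n = max (μ n - ((k + 1) - t)) 0)
    (hr : r = (k * ((k + 1) - t) - ∑ n, m₁ n) / (t - ∑ n, m₁ n - ∑ n, m₂ n))
    (hlo : ∀ n, lo n = m₁ n + r * (μ n - m₁ n - m₂ n))
    (hhi : ∀ n, hi n = m₂ n + (1 - r) * (μ n - m₁ n - m₂ n)) :
    (∀ n, lo n + hi n = μ n) ∧ (∀ n, 0 ≤ lo n) ∧ (∀ n, 0 ≤ hi n) ∧
    ∑ n, lo n = k * ((k + 1) - t) ∧ ∑ n, hi n = (k + 1) * (t - k) ∧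
    (∀ n, lo n ≤ (k + 1) - t) ∧ (∀ n, hi n ≤ t - k) := by
  set g := fun n => μ n - m₁ n - m₂ n with hg_def
  have hg : ∀ n, 0 ≤ g n := fun n => by
    simp only [hg_def, hm₁, hm₂]
    exact sub_max_sub_sub_max_sub_nonneg (hμ0 n) (hμ1 n) (by linarith) (by linarith) (by ring)
  have hD : t - ∑ n, m₁ n - ∑ n, m₂ n = ∑ n, g n := by
    rw [ht, ← sum_sub_distrib, ← sum_sub_distrib]
  have hsum₁ : ∑ n, m₁ n ≤ k * ((k + 1) - t) := by
    have := sum_max_sub_le hμ0 hμ1 (sub_nonneg.mpr hkt) (by linarith) k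
    simp only [← hm₁, ← ht] at this
    exact this.trans (max_le (le_of_eq (by ring)) (le_of_eq (by ring)))
  have hsum₂ : ∑ n, m₂ n ≤ (k + 1) * (t - k) := by
    have := sum_max_sub_le hμ0 hμ1 (sub_nonneg.mpr htk) (by linarith) (k + 1)
    simp only [← hm₂, ← ht] at this
    push_cast at this
    exact this.trans (max_le (le_of_eq (by ring)) (by nlinarith))
  have hp0 : 0 ≤ k * ((k + 1) - t) - ∑ n, m₁ n := sub_nonneg.mpr hsum₁
  have hpD : k * ((k + 1) - t) - ∑ n, m₁ n ≤ t - ∑ n, m₁ n - ∑ n, m₂ n := by linarith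
  have hD0 := hp0.trans hpD
  have hr0 : 0 ≤ r := hr ▸ div_nonneg hp0 hD0
  have hr1 : r ≤ 1 := hr ▸ div_le_one_of_le₀ hpD hD0
  -- A zero denominator forces a zero numerator, so this survives `x / 0 = 0`.
  have hrD : r * ∑ n, g n = k * ((k + 1) - t) - ∑ n, m₁ n :=
    hD ▸ hr ▸ div_mul_cancel_of_imp fun h => le_antisymm (h ▸ hpD) hp0
  refine ⟨fun n => by rw [hlo, hhi]; ring, fun n => ?_, fun n => ?_, ?_, ?_, fun n => ?_,
    fun n => ?_⟩
  · rw [hlo]; exact add_nonneg (hm₁ n ▸ le_max_right _ _) (mul_nonneg hr0 (hg n))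
  · rw [hhi]; exact add_nonneg (hm₂ n ▸ le_max_right _ _) (mul_nonneg (by linarith) (hg n))
  · rw [sum_congr rfl fun n _ => hlo n, sum_add_distrib, ← mul_sum, hrD]; ring
  · rw [sum_congr rfl fun n _ => hhi n, sum_add_distrib, ← mul_sum, sub_mul, one_mul, hrD,
      ← hD]
    ring
  · have := hm₂ n ▸ le_max_left (μ n - ((k + 1) - t)) 0
    have := mul_le_of_le_one_left (hg n) hr1
    rw [hlo]; linarith
  · have := hm₁ n ▸ le_max_left (μ n - (t - k)) 0
    have := mul_le_of_le_one_left (hg n) (sub_le_self 1 hr0)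
    rw [hhi]; linarith

end Split

theorem stmt_18_general (N : ℕ) (μ : Fin N → ℝ)
    (hμ0 : ∀ n, 0 ≤ μ n) (hμ1 : ∀ n, μ n ≤ 1)
    (t : ℝ) (ht : t = ∑ n, μ n) (htni : ¬ ∃ z : ℤ, (z : ℝ) = t)
    (m₁ m₂ : Fin N → ℝ)
    (hm₁ : ∀ n, m₁ n = max (μ n - (t - (⌊t⌋ : ℝ))) 0)
    (hm₂ : ∀ n, m₂ n = max (μ n - ((⌈t⌉ : ℝ) - t)) 0)
    (r : ℝ)
    (hr : r = ((⌊t⌋ : ℝ) * ((⌈t⌉ : ℝ) - t) - ∑ n, m₁ n) /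
      (t - ∑ n, m₁ n - ∑ n, m₂ n))
    (μlo μhi : Fin N → ℝ)
    (hμlo : ∀ n, μlo n = m₁ n + r * (μ n - m₁ n - m₂ n))
    (hμhi : ∀ n, μhi n = m₂ n + (1 - r) * (μ n - m₁ n - m₂ n)) :
    (∀ n, μlo n + μhi n = μ n) ∧
    (∀ n, 0 ≤ μlo n) ∧ (∀ n, 0 ≤ μhi n) ∧
    (∑ n, μlo n = (⌊t⌋ : ℝ) * ((⌈t⌉ : ℝ) - t)) ∧
    (∑ n, μhi n = (⌈t⌉ : ℝ) * (t - (⌊t⌋ : ℝ))) ∧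
    (∀ n, μlo n ≤ (⌈t⌉ : ℝ) - t) ∧
    (∀ n, μhi n ≤ t - (⌊t⌋ : ℝ)) ∧
    (∃ α : Finset (Fin N) → ℝ, (∀ S, 0 ≤ α S) ∧
      ∀ n : Fin N,
        ∑ S ∈ (Finset.univ.powersetCard ⌊t⌋.toNat).filter (fun S => n ∈ S), α S = μlo n) ∧
    (∃ β : Finset (Fin N) → ℝ, (∀ S, 0 ≤ β S) ∧
      ∀ n : Fin N,
        ∑ S ∈ (Finset.univ.powersetCard ⌈t⌉.toNat).filter (fun S => n ∈ S), β S = μhi n) := by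
  have hceil : (⌈t⌉ : ℝ) = ⌊t⌋ + 1 := by
    exact_mod_cast (Int.ceil_eq_floor_add_one_iff_notMem t).mpr htni
  rw [hceil] at hm₂ hr ⊢
  obtain ⟨hadd, hlo0, hhi0, hlo_sum, hhi_sum, hlo_le, hhi_le⟩ :=
    floor_ceil_split_spec hμ0 hμ1 ht (Int.floor_le t) (Int.lt_floor_add_one t).le hm₁ hm₂ hr
      hμlo hμhi
  have hfloor : 0 ≤ ⌊t⌋ := Int.floor_nonneg.mpr (ht ▸ sum_nonneg fun n _ => hμ0 n)
  have hτlo : ((⌊t⌋.toNat : ℕ) : ℝ) = ⌊t⌋ := by exact_mod_cast Int.toNat_of_nonneg hfloor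
  have hτhi : ((⌈t⌉.toNat : ℕ) : ℝ) = ⌊t⌋ + 1 := by
    rw [← hceil]; exact_mod_cast Int.toNat_of_nonneg (hfloor.trans (Int.floor_le_ceil t))
  obtain ⟨α, hα⟩ := exists_isFilling (sub_nonneg.mpr (Int.lt_floor_add_one t).le) hlo0 hlo_le
    (by rw [hτlo, hlo_sum])
  obtain ⟨β, hβ⟩ := exists_isFilling (sub_nonneg.mpr (Int.floor_le t)) hhi0 hhi_le
    (by rw [hτhi, hhi_sum])
  exact ⟨hadd, hlo0, hhi0, hlo_sum, hhi_sum, hlo_le, hhi_le, ⟨α, hα⟩, ⟨β, hβ⟩⟩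

theorem stmt_18 (N : ℕ) (hN : 0 < N) (μ : Fin N → ℝ)
    (hμ0 : ∀ n, 0 ≤ μ n) (hμ1 : ∀ n, μ n ≤ 1)
    (t : ℝ) (ht : t = ∑ n, μ n) (ht1 : 1 ≤ t) (htni : ¬ ∃ z : ℤ, (z : ℝ) = t)
    (m₁ m₂ : Fin N → ℝ)
    (hm₁ : ∀ n, m₁ n = max (μ n - (t - (⌊t⌋ : ℝ))) 0)
    (hm₂ : ∀ n, m₂ n = max (μ n - ((⌈t⌉ : ℝ) - t)) 0)
    (r : ℝ)
    (hr : r = ((⌊t⌋ : ℝ) * ((⌈t⌉ : ℝ) - t) - ∑ n, m₁ n) /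
      (t - ∑ n, m₁ n - ∑ n, m₂ n))
    (μlo μhi : Fin N → ℝ)
    (hμlo : ∀ n, μlo n = m₁ n + r * (μ n - m₁ n - m₂ n))
    (hμhi : ∀ n, μhi n = m₂ n + (1 - r) * (μ n - m₁ n - m₂ n)) :
    (∀ n, μlo n + μhi n = μ n) ∧
    (∀ n, 0 ≤ μlo n) ∧ (∀ n, 0 ≤ μhi n) ∧
    (∑ n, μlo n = (⌊t⌋ : ℝ) * ((⌈t⌉ : ℝ) - t)) ∧
    (∑ n, μhi n = (⌈t⌉ : ℝ) * (t - (⌊t⌋ : ℝ))) ∧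
    (∀ n, μlo n ≤ (⌈t⌉ : ℝ) - t) ∧
    (∀ n, μhi n ≤ t - (⌊t⌋ : ℝ)) ∧
    (∃ α : Finset (Fin N) → ℝ, (∀ S, 0 ≤ α S) ∧
      ∀ n : Fin N,
        ∑ S ∈ (Finset.univ.powersetCard ⌊t⌋.toNat).filter (fun S => n ∈ S), α S = μlo n) ∧
    (∃ β : Finset (Fin N) → ℝ, (∀ S, 0 ≤ β S) ∧
      ∀ n : Fin N,
        ∑ S ∈ (Finset.univ.powersetCard ⌈t⌉.toNat).filter (fun S => n ∈ S), β S = μhi n) :=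
  stmt_18_general N μ hμ0 hμ1 t ht htni m₁ m₂ hm₁ hm₂ r hr μlo μhi hμlo hμhi
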